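/- arXiv:2110.09659 — 2 statements merged into one kernel-verified Lean document; each statement's English description precedes it below -/
import Mathlib

section
/- Let G be a group and A an abelian group regarded as a G-module with trivial G-action. Let A[e] denote the subgroup of A[G] = G →₀ A consisting of functions supported at the identity element e of G. Then Wh₁⁺(G;A), defined as the coinvariants of the diagonal G-action on the quotient A[G]/A[e], is isomorphic as an abelian group to the direct sum of one copy of A for each nonidentity conjugacy class of G, i.e., to {c : ConjClasses G // c ≠ [e]} →₀ A. -/
/-!
Summing coefficients over each nonidentity conjugacy class gives a homomorphism
`A[G] → ⊕_{c ≠ [e]} A`; it kills `A[e]` and is invariant under conjugation, so it descends to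
`Wh₁⁺(G;A)`. Placing a coefficient at a chosen representative of its class gives the inverse:
in the coinvariants `a·g = a·g'` whenever `g` and `g'` are conjugate, and `a·e = 0`.
-/

/-- The diagonal action of `σ : G` on `A[G] = G →₀ A` for a trivial `G`-action on `A`:
it sends `f` to `τ ↦ f (σ⁻¹ * τ * σ)`, i.e. permutes the coordinates by conjugation. -/
noncomputable def conjHom (G : Type*) [Group G] (A : Type*) [AddCommGroup A] (σ : G) :
    (G →₀ A) →+ (G →₀ A) :=
  Finsupp.mapDomain.addMonoidHom fun x => σ * x * σ⁻¹

/-- The subgroup `A[e]` of `A[G] = G →₀ A` consisting of functions supported at the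
identity element of `G`. -/
def suppAtOne (G : Type*) [Group G] (A : Type*) [AddCommGroup A] :
    AddSubgroup (G →₀ A) where
  carrier := {f | (f.support : Set G) ⊆ ({1} : Set G)}
  zero_mem' := by simp
  add_mem' := by
    classical
    intro f g hf hg τ hτ
    have h : τ ∈ f.support ∪ g.support := Finsupp.support_add (Finset.mem_coe.mp hτ)
    rcases Finset.mem_union.mp h with h' | h'
    · exact hf h'
    · exact hg h'
  neg_mem' := by
    intro f hf
    simpa using hf

/-- The diagonal `G`-action descends to the quotient `A[G]/A[e]`. -/
noncomputable def qAct (G : Type*) [Group G] (A : Type*) [AddCommGroup A] (σ : G) :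
    ((G →₀ A) ⧸ suppAtOne G A) →+ ((G →₀ A) ⧸ suppAtOne G A) :=
  QuotientAddGroup.map _ _ (conjHom G A σ) (by
    classical
    intro f hf
    simp only [AddSubgroup.mem_comap]
    intro τ hτ
    have h1 : τ ∈ (Finsupp.mapDomain (fun x => σ * x * σ⁻¹) f).support :=
      Finset.mem_coe.mp hτ
    have h2 := Finsupp.mapDomain_support h1
    rcases Finset.mem_image.mp h2 with ⟨x, hx, rfl⟩
    have : x ∈ ({1} : Set G) := hf hx
    simp only [Set.mem_singleton_iff] at this
    subst this
    simp)

/-- The subgroup of `A[G]/A[e]` generated by all `σ · x − x`, so that the quotient by it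
is the group of coinvariants `Wh₁⁺(G;A)`. -/
noncomputable def whRel (G : Type*) [Group G] (A : Type*) [AddCommGroup A] :
    AddSubgroup ((G →₀ A) ⧸ suppAtOne G A) :=
  AddSubgroup.closure
    {x | ∃ (σ : G) (q : (G →₀ A) ⧸ suppAtOne G A), x = qAct G A σ q - q}

/-- `Wh₁⁺(G;A)`: the coinvariants of the diagonal `G`-action on `A[G]/A[e]`. -/
noncomputable abbrev Wh1Plus (G : Type*) [Group G] (A : Type*) [AddCommGroup A] :=
  ((G →₀ A) ⧸ suppAtOne G A) ⧸ whRel G A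

lemma ConjClasses.mk_out {M : Type*} [Monoid M] (c : ConjClasses M) :
    ConjClasses.mk c.out = c := by
  rw [← ConjClasses.quotient_mk_eq_mk]
  exact Quotient.out_eq c

abbrev NontrivialConjClasses (G : Type*) [Group G] :=
  {c : ConjClasses G // c ≠ ConjClasses.mk (1 : G)}

namespace Wh1Plus

variable {G : Type*} [Group G] {A : Type*} [AddCommGroup A]

lemma conjHom_single (σ g : G) (a : A) :
    conjHom G A σ (Finsupp.single g a) = Finsupp.single (σ * g * σ⁻¹) a :=
  Finsupp.mapDomain_single

noncomputable def classCoeffs : (G →₀ A) →+ NontrivialConjClasses G →₀ A :=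
  Finsupp.subtypeDomainAddMonoidHom.comp (Finsupp.mapDomain.addMonoidHom ConjClasses.mk)

lemma classCoeffs_single_of_ne {g : G} (a : A) (hg : ConjClasses.mk g ≠ ConjClasses.mk 1) :
    classCoeffs (Finsupp.single g a) = Finsupp.single ⟨ConjClasses.mk g, hg⟩ a := by
  classical
  ext c
  simp [classCoeffs, Finsupp.subtypeDomainAddMonoidHom, Finsupp.single_apply, Subtype.ext_iff]

lemma classCoeffs_single_one (a : A) : classCoeffs (Finsupp.single (1 : G) a) = 0 := by
  ext c
  simp [classCoeffs, Finsupp.subtypeDomainAddMonoidHom, Ne.symm c.2]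

lemma classCoeffs_conjHom (σ : G) (f : G →₀ A) :
    classCoeffs (conjHom G A σ f) = classCoeffs f := by
  simp only [classCoeffs, conjHom, AddMonoidHom.comp_apply, Finsupp.mapDomain.addMonoidHom_apply,
    ← Finsupp.mapDomain_comp]
  congr 2
  funext x
  show ConjClasses.mk (σ * x * σ⁻¹) = ConjClasses.mk x
  exact ConjClasses.mk_eq_mk_iff_isConj.mpr (isConj_iff.mpr ⟨σ, rfl⟩).symm

lemma mem_suppAtOne_iff {f : G →₀ A} : f ∈ suppAtOne G A ↔ f = Finsupp.single 1 (f 1) := by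
  rw [← Finsupp.support_subset_singleton]
  exact ⟨fun hf x hx => by simpa using hf hx, fun hf x hx => by simpa using hf hx⟩

lemma suppAtOne_le_ker_classCoeffs : suppAtOne G A ≤ (classCoeffs (G := G) (A := A)).ker := by
  intro f hf
  rw [AddMonoidHom.mem_ker, mem_suppAtOne_iff.mp hf, classCoeffs_single_one]

noncomputable def mk : (G →₀ A) →+ Wh1Plus G A :=
  (QuotientAddGroup.mk' (whRel G A)).comp (QuotientAddGroup.mk' (suppAtOne G A))

lemma mk_surjective : Function.Surjective (mk (G := G) (A := A)) :=
  (QuotientAddGroup.mk'_surjective _).comp (QuotientAddGroup.mk'_surjective _)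

lemma mk_conjHom (σ : G) (f : G →₀ A) : mk (conjHom G A σ f) = mk f := by
  refine (QuotientAddGroup.eq_iff_sub_mem (N := whRel G A)).mpr (AddSubgroup.subset_closure ?_)
  exact ⟨σ, QuotientAddGroup.mk f, rfl⟩

lemma mk_single_of_isConj {g g' : G} (h : IsConj g g') (a : A) :
    mk (Finsupp.single g a) = mk (Finsupp.single g' a) := by
  obtain ⟨σ, rfl⟩ := isConj_iff.mp h
  rw [← conjHom_single, mk_conjHom]

lemma mk_single_one (a : A) : mk (Finsupp.single (1 : G) a) = 0 := by
  have : Finsupp.single (1 : G) a ∈ suppAtOne G A := mem_suppAtOne_iff.mpr (by simp)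
  simp [mk, (QuotientAddGroup.eq_zero_iff _).mpr this]

noncomputable def toFinsupp : Wh1Plus G A →+ NontrivialConjClasses G →₀ A :=
  QuotientAddGroup.lift _ (QuotientAddGroup.lift _ classCoeffs suppAtOne_le_ker_classCoeffs) <| by
    refine (AddSubgroup.closure_le _).mpr ?_
    rintro _ ⟨σ, q, rfl⟩
    induction q using QuotientAddGroup.induction_on with
    | H f =>
      rw [SetLike.mem_coe, AddMonoidHom.mem_ker, map_sub]
      exact sub_eq_zero.mpr (classCoeffs_conjHom σ f)

lemma toFinsupp_mk (f : G →₀ A) : toFinsupp (mk f) = classCoeffs f := rfl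

noncomputable def ofFinsupp : (NontrivialConjClasses G →₀ A) →+ Wh1Plus G A :=
  mk.comp (Finsupp.mapDomain.addMonoidHom fun c : NontrivialConjClasses G => c.1.out)

lemma ofFinsupp_single (c : NontrivialConjClasses G) (a : A) :
    ofFinsupp (Finsupp.single c a) = mk (Finsupp.single c.1.out a) :=
  congr_arg mk Finsupp.mapDomain_single

lemma ofFinsupp_classCoeffs (f : G →₀ A) : ofFinsupp (classCoeffs f) = mk f := by
  suffices (ofFinsupp.comp classCoeffs : (G →₀ A) →+ Wh1Plus G A) = mk from
    DFunLike.congr_fun this f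
  refine Finsupp.addHom_ext fun g a => ?_
  by_cases hg : ConjClasses.mk g = ConjClasses.mk 1
  · obtain rfl : g = 1 := isConj_one_left.mp (ConjClasses.mk_eq_mk_iff_isConj.mp hg)
    simp [classCoeffs_single_one, mk_single_one]
  · rw [AddMonoidHom.comp_apply, classCoeffs_single_of_ne a hg, ofFinsupp_single]
    exact mk_single_of_isConj (ConjClasses.mk_eq_mk_iff_isConj.mp (ConjClasses.mk_out _)) a

lemma toFinsupp_ofFinsupp (x : NontrivialConjClasses G →₀ A) :
    toFinsupp (ofFinsupp x) = x := by
  induction x using Finsupp.induction_linear with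
  | zero => simp
  | add x y hx hy => simp [hx, hy]
  | single c a =>
    have hc : ConjClasses.mk c.1.out ≠ ConjClasses.mk 1 := by simpa [ConjClasses.mk_out] using c.2
    rw [ofFinsupp_single, toFinsupp_mk, classCoeffs_single_of_ne a hc]
    simp [ConjClasses.mk_out]

noncomputable def equivFinsupp : Wh1Plus G A ≃+ (NontrivialConjClasses G →₀ A) where
  toFun := toFinsupp
  invFun := ofFinsupp
  left_inv x := by
    obtain ⟨f, rfl⟩ := mk_surjective x
    rw [toFinsupp_mk, ofFinsupp_classCoeffs]
  right_inv := toFinsupp_ofFinsupp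
  map_add' := map_add toFinsupp

end Wh1Plus

/-- `Wh₁⁺(G;A)` (with trivial `G`-action on `A`) is isomorphic to the direct sum of one
copy of `A` for each nonidentity conjugacy class of `G`. -/
theorem stmt2 {G : Type*} [Group G] {A : Type*} [AddCommGroup A] :
    Nonempty (Wh1Plus G A ≃+
      ({c : ConjClasses G // c ≠ ConjClasses.mk (1 : G)} →₀ A)) :=
  ⟨Wh1Plus.equivFinsupp⟩
end

section
/- Let G be a group, A a left G-module (an abelian group with G-action by additive automorphisms), and g ∈ G. Let O(g) ⊆ G be the conjugacy class of g, and equip the abelian group O(g) →₀ A with the diagonal G-action (σ · f)(τ) = σ · f(σ⁻¹τσ). Then the coinvariants of this G-action on O(g) →₀ A are isomorphic, as an abelian group, to the coinvariants A_{C(g)} of the restricted action of the centralizer C(g) = {σ ∈ G : σg = gσ} on A, i.e., to A modulo the subgroup generated by all σ·a − a with σ ∈ C(g), a ∈ A; the isomorphism is induced by evaluating at g (sending the class of a·δ_g to the class of a). -/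
/-!
Every `τ ∈ O(g)` is `c g c⁻¹` for a chosen conjugator `c = c_τ`, and the relation
`σ · (a δ_g) ≡ a δ_g` lets one move every `a δ_τ` to `(c_τ⁻¹ • a) δ_g`. Conversely
`a δ_τ ↦ [c_τ⁻¹ • a]` is well defined on the coinvariants: two conjugators of `τ` differ by an
element of `C(g)`, which acts trivially on `A_{C(g)}`. These two maps are mutually inverse.
-/

/-- The conjugacy class `O(g) = {τ g τ⁻¹ : τ ∈ G}` of `g`, as a subtype of `G`. -/
def ConjOrbit (G : Type*) [Group G] (g : G) := {τ : G // IsConj g τ}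

/-- Conjugation by `σ` permutes the conjugacy class `O(g)`. -/
def conjMapO (G : Type*) [Group G] (g σ : G) : ConjOrbit G g → ConjOrbit G g :=
  fun τ => ⟨σ * τ.1 * σ⁻¹, τ.2.trans (isConj_iff.mpr ⟨σ, rfl⟩)⟩

/-- The diagonal action of `σ : G` on `O(g) →₀ A`, sending `f` to
`τ ↦ σ • f (σ⁻¹ τ σ)`. -/
noncomputable def diagO (G : Type*) [Group G] (A : Type*) [AddCommGroup A]
    [DistribMulAction G A] (g σ : G) : (ConjOrbit G g →₀ A) →+ (ConjOrbit G g →₀ A) :=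
  (Finsupp.mapDomain.addMonoidHom (conjMapO G g σ)).comp
    (Finsupp.mapRange.addMonoidHom (DistribMulAction.toAddMonoidHom A σ))

/-- The subgroup of `O(g) →₀ A` generated by the elements `σ · f − f`; the quotient by it
is the group of coinvariants of the diagonal `G`-action on `O(g) →₀ A`. -/
noncomputable def orbitRel (G : Type*) [Group G] (A : Type*) [AddCommGroup A]
    [DistribMulAction G A] (g : G) : AddSubgroup (ConjOrbit G g →₀ A) :=
  AddSubgroup.closure
    {x | ∃ (σ : G) (f : ConjOrbit G g →₀ A), x = diagO G A g σ f - f}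

/-- The subgroup of `A` generated by the elements `σ • a − a` with `σ` in the centralizer
`C(g)`; the quotient by it is the group of coinvariants `A_{C(g)}`. -/
noncomputable def centRel (G : Type*) [Group G] (A : Type*) [AddCommGroup A]
    [DistribMulAction G A] (g : G) : AddSubgroup A :=
  AddSubgroup.closure
    {x | ∃ σ ∈ Subgroup.centralizer ({g} : Set G), ∃ a : A, x = σ • a - a}

namespace ConjOrbit

variable {G : Type*} [Group G] {g : G}

variable (g) in
def base : ConjOrbit G g := ⟨g, IsConj.refl g⟩

noncomputable def conjugator (τ : ConjOrbit G g) : G := (isConj_iff.mp τ.2).choose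

lemma conjugator_mul_mul_inv (τ : ConjOrbit G g) :
    τ.conjugator * g * τ.conjugator⁻¹ = τ.1 :=
  (isConj_iff.mp τ.2).choose_spec

lemma conjMapO_conjugator_base (τ : ConjOrbit G g) :
    conjMapO G g τ.conjugator (base g) = τ :=
  Subtype.ext τ.conjugator_mul_mul_inv

lemma conjMapO_base_of_mem_centralizer {σ : G} (hσ : σ ∈ Subgroup.centralizer {g}) :
    conjMapO G g σ (base g) = base g := by
  refine Subtype.ext ?_
  change σ * g * σ⁻¹ = g
  rw [Subgroup.mem_centralizer_singleton_iff.mp hσ, mul_inv_cancel_right]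

end ConjOrbit

open ConjOrbit

section Coinvariants

variable {G : Type*} [Group G] {A : Type*} [AddCommGroup A] [DistribMulAction G A] {g : G}

lemma diagO_single (σ : G) (τ : ConjOrbit G g) (a : A) :
    diagO G A g σ (Finsupp.single τ a) = Finsupp.single (conjMapO G g σ τ) (σ • a) := by
  simp [diagO, Finsupp.mapRange_single, Finsupp.mapDomain_single]

lemma inv_mul_mem_centralizer_of_conj_eq {a b : G} (h : a * g * a⁻¹ = b * g * b⁻¹) :
    a⁻¹ * b ∈ Subgroup.centralizer {g} := by
  rw [Subgroup.mem_centralizer_singleton_iff]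
  calc a⁻¹ * b * g = a⁻¹ * (b * g * b⁻¹) * b := by group
    _ = a⁻¹ * (a * g * a⁻¹) * b := by rw [h]
    _ = g * (a⁻¹ * b) := by group

lemma mk_smul_of_mem_centralizer {σ : G} (hσ : σ ∈ Subgroup.centralizer {g}) (a : A) :
    ((σ • a : A) : A ⧸ centRel G A g) = a :=
  (QuotientAddGroup.eq_iff_sub_mem).mpr (AddSubgroup.subset_closure ⟨σ, hσ, a, rfl⟩)

lemma mk_inv_smul_eq_of_conj_eq {a b : G} (h : a * g * a⁻¹ = b * g * b⁻¹) (x : A) :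
    ((a⁻¹ • x : A) : A ⧸ centRel G A g) = (b⁻¹ • x : A) := by
  rw [← mk_smul_of_mem_centralizer (inv_mul_mem_centralizer_of_conj_eq h) (b⁻¹ • x),
    smul_smul, mul_inv_cancel_right]

variable (G A g) in
noncomputable def toCentCoinv : (ConjOrbit G g →₀ A) →+ A ⧸ centRel G A g :=
  Finsupp.liftAddHom fun τ =>
    (QuotientAddGroup.mk' (centRel G A g)).comp
      (DistribSMul.toAddMonoidHom A τ.conjugator⁻¹)

lemma toCentCoinv_single (τ : ConjOrbit G g) (a : A) :
    toCentCoinv G A g (Finsupp.single τ a) = (τ.conjugator⁻¹ • a : A) :=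
  Finsupp.liftAddHom_apply_single _ _ _

lemma toCentCoinv_single_base (a : A) :
    toCentCoinv G A g (Finsupp.single (base g) a) = (a : A ⧸ centRel G A g) := by
  have h : (base g).conjugator * g * (base g).conjugator⁻¹ = 1 * g * 1⁻¹ := by
    rw [conjugator_mul_mul_inv, inv_one, mul_one, one_mul]
    rfl
  rw [toCentCoinv_single, mk_inv_smul_eq_of_conj_eq h, inv_one, one_smul]

lemma toCentCoinv_diagO (σ : G) (f : ConjOrbit G g →₀ A) :
    toCentCoinv G A g (diagO G A g σ f) = toCentCoinv G A g f := by
  induction f using Finsupp.induction_linear with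
  | zero => simp only [map_zero]
  | add f₁ f₂ h₁ h₂ => simp only [map_add, h₁, h₂]
  | single τ a =>
    have h : σ * τ.conjugator * g * (σ * τ.conjugator)⁻¹ =
        (conjMapO G g σ τ).conjugator * g * (conjMapO G g σ τ).conjugator⁻¹ := by
      calc σ * τ.conjugator * g * (σ * τ.conjugator)⁻¹
          = σ * (τ.conjugator * g * τ.conjugator⁻¹) * σ⁻¹ := by group
        _ = _ := by rw [conjugator_mul_mul_inv, conjugator_mul_mul_inv]; rfl
    rw [diagO_single, toCentCoinv_single, toCentCoinv_single, ← mk_inv_smul_eq_of_conj_eq h,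
      mul_inv_rev σ, mul_smul, inv_smul_smul]

lemma orbitRel_le_ker_toCentCoinv : orbitRel G A g ≤ (toCentCoinv G A g).ker := by
  rw [orbitRel, AddSubgroup.closure_le]
  rintro _ ⟨σ, f, rfl⟩
  rw [SetLike.mem_coe, AddMonoidHom.mem_ker, map_sub, toCentCoinv_diagO, sub_self]

lemma mk_diagO (σ : G) (f : ConjOrbit G g →₀ A) :
    (diagO G A g σ f : (ConjOrbit G g →₀ A) ⧸ orbitRel G A g) = f :=
  (QuotientAddGroup.eq_iff_sub_mem).mpr (AddSubgroup.subset_closure ⟨σ, f, rfl⟩)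

variable (G A g) in
noncomputable def singleBase : A →+ (ConjOrbit G g →₀ A) ⧸ orbitRel G A g :=
  (QuotientAddGroup.mk' (orbitRel G A g)).comp (Finsupp.singleAddHom (base g))

lemma centRel_le_ker_singleBase : centRel G A g ≤ (singleBase G A g).ker := by
  rw [centRel, AddSubgroup.closure_le]
  rintro _ ⟨σ, hσ, a, rfl⟩
  have hfix : diagO G A g σ (Finsupp.single (base g) a) = Finsupp.single (base g) (σ • a) := by
    rw [diagO_single, conjMapO_base_of_mem_centralizer hσ]
  rw [SetLike.mem_coe, AddMonoidHom.mem_ker, map_sub, sub_eq_zero]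
  change ((Finsupp.single (base g) (σ • a) : ConjOrbit G g →₀ A) :
    (ConjOrbit G g →₀ A) ⧸ orbitRel G A g) = (Finsupp.single (base g) a : ConjOrbit G g →₀ A)
  rw [← hfix, mk_diagO]

lemma mk_single_eq_mk_single_base (τ : ConjOrbit G g) (a : A) :
    (Finsupp.single τ a : (ConjOrbit G g →₀ A) ⧸ orbitRel G A g) =
      (Finsupp.single (base g) (τ.conjugator⁻¹ • a) : ConjOrbit G g →₀ A) := by
  rw [← mk_diagO τ.conjugator (Finsupp.single (base g) _), diagO_single,
    conjMapO_conjugator_base, smul_inv_smul]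

end Coinvariants

/-- The coinvariants of the diagonal `G`-action on `O(g) →₀ A` are isomorphic to the
coinvariants `A_{C(g)}` of the centralizer action on `A`, via the map induced by
evaluation at `g` (sending the class of `a·δ_g` to the class of `a`). -/
theorem stmt4 {G : Type*} [Group G] {A : Type*} [AddCommGroup A] [DistribMulAction G A]
    (g : G) :
    ∃ e : ((ConjOrbit G g →₀ A) ⧸ orbitRel G A g) ≃+ (A ⧸ centRel G A g),
      ∀ a : A,
        e (QuotientAddGroup.mk' (orbitRel G A g)
            (Finsupp.single ⟨g, IsConj.refl g⟩ a)) =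
          QuotientAddGroup.mk' (centRel G A g) a := by
  let F := QuotientAddGroup.lift _ (toCentCoinv G A g) orbitRel_le_ker_toCentCoinv
  let F' := QuotientAddGroup.lift _ (singleBase G A g) centRel_le_ker_singleBase
  have hF'F : F'.comp F = AddMonoidHom.id _ := by
    refine QuotientAddGroup.addMonoidHom_ext _ (Finsupp.addHom_ext fun τ a => ?_)
    change F' (toCentCoinv G A g (Finsupp.single τ a)) = _
    rw [toCentCoinv_single]
    exact (mk_single_eq_mk_single_base τ a).symm
  have hFF' : F.comp F' = AddMonoidHom.id _ := by
    refine QuotientAddGroup.addMonoidHom_ext _ (AddMonoidHom.ext fun a => ?_)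
    exact toCentCoinv_single_base a
  exact ⟨F.toAddEquiv F' hF'F hFF', toCentCoinv_single_base⟩
end
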